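/- For n ≥ 1, the maximum size M(n,1) of a single-grain-error-correcting code of length n satisfies M(n,1) ≤ 2·⌊(2^{n+1} − 2)/(2n)⌋. -/

import Mathlib

/-!
Flipping a word `x` at one of its `runs x - 1` run boundaries is a single grain error, so the
grain ball of `x` contains a set `boundaryBall x` of exactly `runs x` words, none with more runs
than `x` and all with the first bit of `x`. Weighting each word `z` by `1 / runs z`, these sets
therefore have weight at least `1` each, and they are disjoint for distinct codewords. A word is
determined by its first bit and its set of run boundaries, a subset of the `n - 1` inner
positions, so the words with a given first bit have total weight at most
`∑ₖ C(n-1,k)/(k+1) = (2ⁿ - 1)/n`. Hence each of the two halves of the code (split by the first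
bit) has at most `⌊(2ⁿ - 1)/n⌋` words.
-/

/-- `e` is a `t`-grain-error for `x`: weight at most `t`, `e₁ = 0`, and an error at
position `i` (2 ≤ i ≤ n) requires `x_i ≠ x_{i-1}`. (0-indexed here.) -/
def grainError {n : ℕ} (t : ℕ) (x e : Fin n → ZMod 2) : Prop :=
  (Finset.univ.filter fun i => e i ≠ 0).card ≤ t ∧
  (∀ i : Fin n, (i : ℕ) = 0 → e i = 0) ∧
  (∀ i : Fin n, 0 < (i : ℕ) → e i ≠ 0 →
    x i ≠ x ⟨(i : ℕ) - 1, lt_of_le_of_lt (Nat.sub_le _ _) i.isLt⟩)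

/-- The grain error-ball `B_{t,G}(x)`. -/
def grainBall {n : ℕ} (t : ℕ) (x : Fin n → ZMod 2) : Set (Fin n → ZMod 2) :=
  {y | ∃ e, grainError t x e ∧ y = x + e}

/-- The number of runs of a binary vector. -/
def runs {n : ℕ} (x : Fin n → ZMod 2) : ℕ :=
  (if n = 0 then 0 else 1) +
  (Finset.univ.filter fun i : Fin n =>
    0 < (i : ℕ) ∧ x i ≠ x ⟨(i : ℕ) - 1, lt_of_le_of_lt (Nat.sub_le _ _) i.isLt⟩).card

def grainCorrecting {n : ℕ} (t : ℕ) (C : Finset (Fin n → ZMod 2)) : Prop :=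
  ∀ x ∈ C, ∀ y ∈ C, x ≠ y → Disjoint (grainBall t x) (grainBall t y)

open Finset

lemma ZMod.two_eq_of_ne_iff {a b c : ZMod 2} (h : a ≠ c ↔ b ≠ c) : a = b := by
  revert a b c; decide

lemma ZMod.two_add_one_ne (a : ZMod 2) : a + 1 ≠ a := by
  revert a; decide

lemma ZMod.two_add_one_ne_iff {a b : ZMod 2} : a + 1 ≠ b ↔ a = b := by
  revert a b; decide

lemma sum_range_choose_div_add_one (m : ℕ) :
    ∑ k ∈ range (m + 1), (m.choose k : ℚ) / (k + 1) = (2 ^ (m + 1) - 1) / (m + 1) := by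
  have hterm (k : ℕ) :
      (m.choose k : ℚ) / (k + 1) = ((m + 1).choose (k + 1) : ℚ) / (m + 1) := by
    rw [div_eq_div_iff (by positivity) (by positivity)]
    exact_mod_cast (mul_comm _ _).trans (Nat.add_one_mul_choose_eq m k)
  have htotal : ∑ k ∈ range (m + 1), ((m + 1).choose (k + 1) : ℚ) = 2 ^ (m + 1) - 1 := by
    have := sum_range_succ' (fun k => ((m + 1).choose k : ℚ)) (m + 1)
    rw [← Nat.cast_sum, Nat.sum_range_choose, Nat.choose_zero_right, Nat.cast_one, Nat.cast_pow,
      Nat.cast_ofNat] at this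
    linarith
  simp_rw [hterm, ← sum_div, htotal]

lemma sum_powerset_inv_card_add_one {α : Type*} (s : Finset α) :
    ∑ A ∈ s.powerset, ((#A : ℚ) + 1)⁻¹ = (2 ^ (#s + 1) - 1) / (#s + 1) := by
  rw [sum_powerset_apply_card (fun k => ((k : ℚ) + 1)⁻¹), ← sum_range_choose_div_add_one]
  simp [div_eq_mul_inv]

lemma card_le_sum_of_pairwiseDisjoint {α β R : Type*} [DecidableEq β] [Semiring R]
    [PartialOrder R] [IsOrderedAddMonoid R] {C : Finset α} {U : Finset β} {B : α → Finset β}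
    {w : β → R} (hw : ∀ z ∈ U, 0 ≤ w z) (hBU : ∀ x ∈ C, B x ⊆ U)
    (hB : (C : Set α).PairwiseDisjoint B)
    (hBw : ∀ x ∈ C, 1 ≤ ∑ z ∈ B x, w z) : (#C : R) ≤ ∑ z ∈ U, w z :=
  calc (#C : R) = ∑ _x ∈ C, 1 := by simp
    _ ≤ ∑ x ∈ C, ∑ z ∈ B x, w z := sum_le_sum hBw
    _ = ∑ z ∈ C.biUnion B, w z := (sum_biUnion hB).symm
    _ ≤ ∑ z ∈ U, w z :=
        sum_le_sum_of_subset_of_nonneg (biUnion_subset.2 hBU) fun z hz _ => hw z hz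

section RunBoundaries

variable {n : ℕ}

-- `i - 1` truncates, so `prevIdx 0 = 0`; this is the index used inline in `grainError` and `runs`.
def Fin.prevIdx (i : Fin n) : Fin n := ⟨(i : ℕ) - 1, lt_of_le_of_lt (Nat.sub_le _ _) i.isLt⟩

def runBoundaries (x : Fin n → ZMod 2) : Finset (Fin n) :=
  {i | 0 < (i : ℕ) ∧ x i ≠ x i.prevIdx}

lemma mem_runBoundaries {x : Fin n → ZMod 2} {i : Fin n} :
    i ∈ runBoundaries x ↔ 0 < (i : ℕ) ∧ x i ≠ x i.prevIdx := by
  simp [runBoundaries]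

lemma runs_eq_card_runBoundaries_add_one [NeZero n] (x : Fin n → ZMod 2) :
    runs x = #(runBoundaries x) + 1 := by
  simp [runs, runBoundaries, Fin.prevIdx, NeZero.ne n, add_comm]

lemma runBoundaries_injOn [NeZero n] (b : ZMod 2) :
    Set.InjOn runBoundaries {z : Fin n → ZMod 2 | z 0 = b} := by
  intro z hz w hw hzw
  suffices ∀ m (hm : m < n), z ⟨m, hm⟩ = w ⟨m, hm⟩ from funext fun i => this i i.isLt
  intro m
  induction m with
  | zero => exact fun _ => hz.trans hw.symm
  | succ m ih =>
    intro hm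
    have hprev : (⟨m + 1, hm⟩ : Fin n).prevIdx = ⟨m, by omega⟩ := rfl
    have := congrArg (⟨m + 1, hm⟩ ∈ ·) hzw
    simp only [mem_runBoundaries, hprev, ih (by omega), eq_iff_iff] at this
    exact ZMod.two_eq_of_ne_iff (by simpa using this)

def flipAt (x : Fin n → ZMod 2) (i : Fin n) : Fin n → ZMod 2 := x + Pi.single i 1

@[simp] lemma flipAt_apply_self (x : Fin n → ZMod 2) (i : Fin n) : flipAt x i i = x i + 1 := by
  simp [flipAt]

lemma flipAt_apply_of_ne (x : Fin n → ZMod 2) {i j : Fin n} (h : j ≠ i) :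
    flipAt x i j = x j := by
  simp [flipAt, h]

lemma flipAt_mem_grainBall {x : Fin n → ZMod 2} {i : Fin n} (hi : i ∈ runBoundaries x) :
    flipAt x i ∈ grainBall 1 x := by
  obtain ⟨hi0, hix⟩ := mem_runBoundaries.1 hi
  have hsupp : ∀ j, (Pi.single i 1 : Fin n → ZMod 2) j ≠ 0 ↔ j = i := by
    intro j; by_cases h : j = i <;> simp [h]
  refine ⟨Pi.single i 1, ⟨?_, fun j hj => ?_, fun j _ hj => ?_⟩, rfl⟩
  · simp only [hsupp, filter_eq', mem_univ, if_true, card_singleton, le_refl]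
  · by_contra h; exact absurd ((hsupp j).1 h ▸ hj) hi0.ne'
  · rwa [(hsupp j).1 hj]

lemma flipAt_injective (x : Fin n → ZMod 2) : Function.Injective (flipAt x) := by
  intro i j h
  by_contra hij
  exact ZMod.two_add_one_ne (x i) (by simpa [flipAt_apply_of_ne x hij] using congrFun h i)

lemma flipAt_ne_self (x : Fin n → ZMod 2) (i : Fin n) : flipAt x i ≠ x := fun h =>
  ZMod.two_add_one_ne (x i) (by simpa using congrFun h i)

lemma runBoundaries_flipAt_subset {x : Fin n → ZMod 2} {i : Fin n} (hi : i ∈ runBoundaries x) :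
    runBoundaries (flipAt x i) ⊆
      (runBoundaries x).erase i ∪ ({k | (k : ℕ) = i + 1} : Finset (Fin n)) := by
  intro k hk
  obtain ⟨hk0, hkx⟩ := mem_runBoundaries.1 hk
  obtain ⟨hi0, hix⟩ := mem_runBoundaries.1 hi
  have hprev (j : Fin n) (hj : 0 < (j : ℕ)) : j.prevIdx ≠ j := by
    simp [Fin.prevIdx, Fin.ext_iff]; omega
  rw [mem_union, mem_erase, mem_filter_univ]
  by_cases hki : k = i
  · subst hki
    rw [flipAt_apply_self, flipAt_apply_of_ne _ (hprev k hk0), ZMod.two_add_one_ne_iff] at hkx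
    exact absurd hkx hix
  by_cases hk1 : (k : ℕ) = i + 1
  · exact Or.inr hk1
  have hpk : k.prevIdx ≠ i := by
    simp [Fin.prevIdx, Fin.ext_iff]; omega
  rw [flipAt_apply_of_ne _ hki, flipAt_apply_of_ne _ hpk] at hkx
  exact Or.inl ⟨hki, mem_runBoundaries.2 ⟨hk0, hkx⟩⟩

lemma card_runBoundaries_flipAt_le {x : Fin n → ZMod 2} {i : Fin n} (hi : i ∈ runBoundaries x) :
    #(runBoundaries (flipAt x i)) ≤ #(runBoundaries x) := by
  have hsucc : #({k | (k : ℕ) = i + 1} : Finset (Fin n)) ≤ 1 :=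
    card_le_one.2 fun a ha b hb => Fin.ext <| by simp at ha hb; omega
  have := card_le_card (runBoundaries_flipAt_subset hi)
  have := card_union_le ((runBoundaries x).erase i) {k : Fin n | (k : ℕ) = i + 1}
  have := card_erase_add_one hi
  omega

def boundaryBall (x : Fin n → ZMod 2) : Finset (Fin n → ZMod 2) :=
  insert x ((runBoundaries x).image (flipAt x))

lemma coe_boundaryBall_subset_grainBall (x : Fin n → ZMod 2) :
    ↑(boundaryBall x) ⊆ grainBall 1 x := by
  intro z hz
  obtain rfl | ⟨i, hi, rfl⟩ := by simpa [boundaryBall] using hz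
  · exact ⟨0, ⟨by simp, fun _ _ => rfl, fun _ _ h => absurd rfl h⟩, (add_zero z).symm⟩
  · exact flipAt_mem_grainBall hi

lemma card_boundaryBall [NeZero n] (x : Fin n → ZMod 2) : #(boundaryBall x) = runs x := by
  rw [boundaryBall, card_insert_of_notMem, card_image_of_injective _ (flipAt_injective x),
    runs_eq_card_runBoundaries_add_one]
  simpa using fun i _ => flipAt_ne_self x i

lemma runs_le_of_mem_boundaryBall [NeZero n] {x z : Fin n → ZMod 2} (hz : z ∈ boundaryBall x) :
    runs z ≤ runs x := by
  obtain rfl | ⟨i, hi, rfl⟩ := by simpa [boundaryBall] using hz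
  · exact le_rfl
  · simpa [runs_eq_card_runBoundaries_add_one] using card_runBoundaries_flipAt_le hi

lemma apply_zero_of_mem_boundaryBall [NeZero n] {x z : Fin n → ZMod 2}
    (hz : z ∈ boundaryBall x) : z 0 = x 0 := by
  obtain rfl | ⟨i, hi, rfl⟩ := by simpa [boundaryBall] using hz
  · rfl
  · refine flipAt_apply_of_ne x fun h => ?_
    simpa [← h] using (mem_runBoundaries.1 hi).1

lemma one_le_sum_inv_runs_boundaryBall [NeZero n] (x : Fin n → ZMod 2) :
    1 ≤ ∑ z ∈ boundaryBall x, (runs z : ℚ)⁻¹ := by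
  have hpos (y : Fin n → ZMod 2) : (0 : ℚ) < runs y := by
    rw [runs_eq_card_runBoundaries_add_one]; positivity
  calc (1 : ℚ) = #(boundaryBall x) • (runs x : ℚ)⁻¹ := by
        rw [card_boundaryBall, nsmul_eq_mul, mul_inv_cancel₀ (hpos x).ne']
    _ ≤ ∑ z ∈ boundaryBall x, (runs z : ℚ)⁻¹ :=
        card_nsmul_le_sum _ _ _ fun z hz =>
          inv_anti₀ (hpos z) (by exact_mod_cast runs_le_of_mem_boundaryBall hz)

lemma sum_inv_runs_apply_zero_eq_le [NeZero n] (b : ZMod 2) :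
    ∑ z : Fin n → ZMod 2 with z 0 = b, (runs z : ℚ)⁻¹ ≤ (2 ^ n - 1) / n := by
  have hS : #(univ.erase (0 : Fin n)) + 1 = n := by
    rw [card_erase_of_mem (mem_univ _), card_fin, Nat.sub_add_cancel NeZero.one_le]
  have himage : (univ.filter fun z : Fin n → ZMod 2 => z 0 = b).image runBoundaries ⊆
      (univ.erase 0).powerset := by
    simp only [image_subset_iff, mem_powerset]
    intro z _ i hi
    exact mem_erase.2 ⟨fun h => by simpa [h] using (mem_runBoundaries.1 hi).1, mem_univ i⟩
  calc ∑ z : Fin n → ZMod 2 with z 0 = b, (runs z : ℚ)⁻¹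
      = ∑ A ∈ (univ.filter fun z : Fin n → ZMod 2 => z 0 = b).image runBoundaries,
          ((#A : ℚ) + 1)⁻¹ := by
        rw [sum_image fun z hz w hw =>
          runBoundaries_injOn b (by simpa using hz) (by simpa using hw)]
        simp [runs_eq_card_runBoundaries_add_one]
    _ ≤ ∑ A ∈ (univ.erase 0).powerset, ((#A : ℚ) + 1)⁻¹ :=
        sum_le_sum_of_subset_of_nonneg himage fun _ _ _ => by positivity
    _ = (2 ^ n - 1) / n := by
        rw [sum_powerset_inv_card_add_one]
        conv_rhs => rw [← hS]
        push_cast; rfl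

end RunBoundaries

lemma card_filter_apply_zero_eq_le {n : ℕ} [NeZero n] {C : Finset (Fin n → ZMod 2)}
    (hC : grainCorrecting 1 C) (b : ZMod 2) : #{x ∈ C | x 0 = b} ≤ (2 ^ n - 1) / n := by
  have hq : (#{x ∈ C | x 0 = b} : ℚ) ≤ (2 ^ n - 1) / n := by
    refine (card_le_sum_of_pairwiseDisjoint (fun z _ => by positivity) ?_ ?_
      fun x _ => one_le_sum_inv_runs_boundaryBall x).trans (sum_inv_runs_apply_zero_eq_le b)
    · intro x hx z hz
      simpa [apply_zero_of_mem_boundaryBall hz] using (mem_filter.1 hx).2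
    · intro x hx y hy hxy
      have hdisj := hC x (mem_filter.1 hx).1 y (mem_filter.1 hy).1 hxy
      exact Finset.disjoint_coe.1 (hdisj.mono (coe_boundaryBall_subset_grainBall x)
        (coe_boundaryBall_subset_grainBall y))
  rw [← Nat.floor_div_eq_div (K := ℚ)]
  exact Nat.le_floor (by push_cast [Nat.one_le_two_pow]; exact hq)

/-- `M(n,1) ≤ 2⌊(2^{n+1} - 2)/(2n)⌋` (natural division is the floor). -/
theorem stmt7 {n : ℕ} (hn : 1 ≤ n)
    (C : Finset (Fin n → ZMod 2)) (hC : grainCorrecting 1 C) :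
    C.card ≤ 2 * ((2 ^ (n + 1) - 2) / (2 * n)) := by
  have : NeZero n := ⟨by omega⟩
  have hfloor : (2 ^ (n + 1) - 2) / (2 * n) = (2 ^ n - 1) / n := by
    rw [pow_succ, ← Nat.mul_div_mul_left _ n two_pos, Nat.mul_sub_one, mul_comm]
  calc #C = ∑ b : ZMod 2, #{x ∈ C | x 0 = b} := card_eq_sum_card_fiberwise fun _ _ => mem_univ _
    _ ≤ ∑ _b : ZMod 2, (2 ^ n - 1) / n :=
        sum_le_sum fun b _ => card_filter_apply_zero_eq_le hC b
    _ = 2 * ((2 ^ (n + 1) - 2) / (2 * n)) := by simp [hfloor]
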